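/- arXiv:2101.06493 — 4 statements merged into one kernel-verified Lean document; each statement's English description precedes it below -/
import Mathlib

section
/- Let H be a separable Hilbert space with orthonormal basis (eₙ)ₙ, let (Ω, F, ℙ) be a probability space, and let (Xₙ)ₙ be a sequence of real-valued random variables on Ω. If the partial sums S_N = Σ_{n=1}^N Xₙ eₙ converge in probability (i.e., in measure) to some measurable map S : Ω → H, then S_N converges to S ℙ-almost surely. -/
open MeasureTheory Filter Topology

/-!
Convergence in measure yields a subsequence `S_{φ k}` converging to `S` almost surely. At such
an `ω` the coefficients of the partial sums along `e` are eventually frozen, so passing to the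
limit gives `Xₙ ω = ⟪eₙ, S ω⟫`; the full sequence of partial sums is then the expansion of
`S ω` in the Hilbert basis, which converges to `S ω`.
-/

namespace HilbertBasis

variable {𝕜 E : Type*} [RCLike 𝕜] [NormedAddCommGroup E] [InnerProductSpace 𝕜 E]

theorem repr_sum_range_smul (b : HilbertBasis ℕ 𝕜 E) (c : ℕ → 𝕜) (N n : ℕ) :
    b.repr (∑ m ∈ Finset.range N, c m • b m) n = if n < N then c n else 0 := by
  simp only [b.repr_apply_apply, inner_sum, inner_smul_right, orthonormal_iff_ite.mp b.orthonormal,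
    mul_ite, mul_one, mul_zero, Finset.sum_ite_eq, Finset.mem_range]

theorem eq_repr_of_tendsto_sum_range_comp (b : HilbertBasis ℕ 𝕜 E) {c : ℕ → 𝕜} {s : E}
    {φ : ℕ → ℕ} (hφ : StrictMono φ)
    (hs : Tendsto (fun k => ∑ m ∈ Finset.range (φ k), c m • b m) atTop (𝓝 s)) (n : ℕ) :
    c n = b.repr s n := by
  have h_coord : Tendsto (fun k => b.repr (∑ m ∈ Finset.range (φ k), c m • b m) n) atTop
      (𝓝 (b.repr s n)) := by
    simpa only [b.repr_apply_apply] using tendsto_const_nhds.inner hs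
  have h_frozen : ∀ᶠ k in atTop, c n = b.repr (∑ m ∈ Finset.range (φ k), c m • b m) n := by
    filter_upwards [eventually_gt_atTop n] with k hk
    rw [repr_sum_range_smul, if_pos (hk.trans_le hφ.le_apply)]
  exact tendsto_nhds_unique (tendsto_const_nhds.congr' h_frozen) h_coord

theorem tendsto_sum_range_of_tendsto_sum_range_comp (b : HilbertBasis ℕ 𝕜 E) {c : ℕ → 𝕜} {s : E}
    {φ : ℕ → ℕ} (hφ : StrictMono φ)
    (hs : Tendsto (fun k => ∑ m ∈ Finset.range (φ k), c m • b m) atTop (𝓝 s)) :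
    Tendsto (fun N => ∑ m ∈ Finset.range N, c m • b m) atTop (𝓝 s) := by
  rw [show c = fun n => b.repr s n from funext (b.eq_repr_of_tendsto_sum_range_comp hφ hs)]
  exact (b.hasSum_repr s).tendsto_sum_nat

end HilbertBasis

theorem stmt_0_general {H : Type*} [NormedAddCommGroup H] [InnerProductSpace ℝ H]
    {Ω : Type*} [MeasurableSpace Ω] (P : Measure Ω)
    (e : HilbertBasis ℕ ℝ H) (X : ℕ → Ω → ℝ)
    (S : Ω → H)
    (h : TendstoInMeasure P (fun N ω => ∑ n ∈ Finset.range N, X n ω • e n) atTop S) :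
    ∀ᵐ ω ∂P, Tendsto (fun N => ∑ n ∈ Finset.range N, X n ω • e n) atTop (𝓝 (S ω)) := by
  obtain ⟨φ, hφ, h_ae⟩ := h.exists_seq_tendsto_ae
  filter_upwards [h_ae] with ω hω
  exact e.tendsto_sum_range_of_tendsto_sum_range_comp hφ hω

/-- If the partial sums `S_N = ∑_{n<N} Xₙ eₙ` along an orthonormal (Hilbert) basis of a
separable Hilbert space converge in probability to a measurable map `S`, then they
converge to `S` almost surely. -/
theorem stmt_0 {H : Type*} [NormedAddCommGroup H] [InnerProductSpace ℝ H] [CompleteSpace H]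
    [MeasurableSpace H] [BorelSpace H] [TopologicalSpace.SeparableSpace H]
    {Ω : Type*} [MeasurableSpace Ω] (P : Measure Ω) [IsProbabilityMeasure P]
    (e : HilbertBasis ℕ ℝ H) (X : ℕ → Ω → ℝ) (hX : ∀ n, Measurable (X n))
    (S : Ω → H) (hS : Measurable S)
    (h : TendstoInMeasure P (fun N ω => ∑ n ∈ Finset.range N, X n ω • e n) atTop S) :
    ∀ᵐ ω ∂P, Tendsto (fun N => ∑ n ∈ Finset.range N, X n ω • e n) atTop (𝓝 (S ω)) :=
  stmt_0_general P e X S h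
end

section
/- Let α ∈ (1/2, 1), let γ ∈ [1/(2α), 1), let (λₙ)ₙ be a nondecreasing sequence of reals with 0 < λ₁ ≤ λ₂ ≤ ⋯, and let (σₙ)ₙ be a sequence of strictly positive reals. Then the following are equivalent: (a) there exists C₀ > 0 such that for every t > 0, sup_n (1/σₙ)(2αλₙ/(1 − e^{−2αλₙ t}))^{1/(2α)} e^{−λₙ t} ≤ C₀ t^{−γ}; (b) there exists C₁ > 0 such that σₙ ≥ C₁ λₙ^{1/(2α) − γ} for every n. -/
/-!
Write `K(λ, t) = gradKernel α λ t = (2αλ / (1 - e^{-2αλt}))^{1/(2α)} e^{-λt}`. Pulling `λ` out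
of the base gives the scaling law `K(λ, t) = λ^{1/(2α)} K(1, λt)`. Since `x / (1 - e^{-x}) ≤ 1 + x`,
the profile obeys `K(1, s) ≤ (1 + 2α)^{1/(2α)} s^{-γ}` for all `s > 0` as soon as
`1/(2α) ≤ γ ≤ 1`; with the scaling law this turns (b) into (a). Conversely, evaluating (a) at
`t = 1/λₙ` gives `K(1, 1) λₙ^{1/(2α)} ≤ C₀ σₙ λₙ^γ`, which is (b).
-/

open Real

noncomputable def gradKernel (α lam t : ℝ) : ℝ :=
  (2 * α * lam / (1 - exp (-(2 * α * lam * t)))) ^ (1 / (2 * α)) * exp (-lam * t)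

lemma one_sub_exp_neg_pos {x : ℝ} (hx : 0 < x) : 0 < 1 - exp (-x) :=
  sub_pos.mpr (exp_lt_one_iff.mpr (neg_neg_of_pos hx))

lemma one_add_mul_exp_neg_le_one (x : ℝ) : (1 + x) * exp (-x) ≤ 1 := by
  calc (1 + x) * exp (-x) ≤ exp x * exp (-x) := by gcongr; linarith [add_one_le_exp x]
    _ = 1 := by rw [← exp_add, add_neg_cancel, exp_zero]

lemma div_one_sub_exp_neg_le {x : ℝ} (hx : 0 < x) : x / (1 - exp (-x)) ≤ 1 + x := by
  rw [div_le_iff₀ (one_sub_exp_neg_pos hx)]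
  nlinarith [one_add_mul_exp_neg_le_one x]

lemma one_add_rpow_mul_exp_neg_le_one {s γ : ℝ} (hs : 0 ≤ s) (hγ : γ ≤ 1) :
    (1 + s) ^ γ * exp (-s) ≤ 1 :=
  calc (1 + s) ^ γ * exp (-s) ≤ (1 + s) ^ (1 : ℝ) * exp (-s) := by
        gcongr
        linarith
    _ ≤ 1 := by simpa using one_add_mul_exp_neg_le_one s

lemma gradKernel_pos {α lam t : ℝ} (hα : 0 < α) (hlam : 0 < lam) (ht : 0 < t) :
    0 < gradKernel α lam t := by
  have := one_sub_exp_neg_pos (by positivity : 0 < 2 * α * lam * t)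
  unfold gradKernel
  positivity

lemma gradKernel_eq_rpow_mul {α lam t : ℝ} (hα : 0 < α) (hlam : 0 < lam) (ht : 0 < t) :
    gradKernel α lam t = lam ^ (1 / (2 * α)) * gradKernel α 1 (lam * t) := by
  have := one_sub_exp_neg_pos (by positivity : 0 < 2 * α * lam * t)
  simp only [gradKernel, mul_one, one_mul, neg_mul, ← mul_assoc]
  rw [show 2 * α * lam / (1 - exp (-(2 * α * lam * t)))
      = lam * (2 * α / (1 - exp (-(2 * α * lam * t)))) by ring,
    mul_rpow hlam.le (by positivity), mul_assoc]

lemma gradKernel_one_le {α γ s : ℝ} (hα : 0 < α) (hγ0 : 1 / (2 * α) ≤ γ) (hγ1 : γ ≤ 1)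
    (hs : 0 < s) : gradKernel α 1 s ≤ (1 + 2 * α) ^ (1 / (2 * α)) * s ^ (-γ) := by
  set β := 1 / (2 * α)
  have hE := one_sub_exp_neg_pos (by positivity : 0 < 2 * α * s)
  have hbase : 2 * α / (1 - exp (-(2 * α * s))) ≤ (1 + 2 * α) * (1 + s) / s := by
    rw [le_div_iff₀ hs]
    calc 2 * α / (1 - exp (-(2 * α * s))) * s = 2 * α * s / (1 - exp (-(2 * α * s))) := by ring
      _ ≤ 1 + 2 * α * s := div_one_sub_exp_neg_le (by positivity)
      _ ≤ (1 + 2 * α) * (1 + s) := by nlinarith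
  have hfactor : (1 + s) ^ β * s ^ (γ - β) ≤ (1 + s) ^ γ :=
    calc (1 + s) ^ β * s ^ (γ - β) ≤ (1 + s) ^ β * (1 + s) ^ (γ - β) := by
          gcongr
          linarith
      _ = (1 + s) ^ γ := by rw [← rpow_add (by positivity)]; ring_nf
  calc gradKernel α 1 s = (2 * α / (1 - exp (-(2 * α * s)))) ^ β * exp (-s) := by
        simp only [gradKernel, mul_one, neg_mul, one_mul]; rfl
    _ ≤ ((1 + 2 * α) * (1 + s) / s) ^ β * exp (-s) := by gcongr
    _ = (1 + 2 * α) ^ β * ((1 + s) ^ β * s ^ (γ - β) * exp (-s)) * s ^ (-γ) := by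
        rw [div_rpow (by positivity) hs.le, mul_rpow (by positivity) (by positivity),
          rpow_sub hs, rpow_neg hs.le]
        field_simp
    _ ≤ (1 + 2 * α) ^ β * ((1 + s) ^ γ * exp (-s)) * s ^ (-γ) := by gcongr
    _ ≤ (1 + 2 * α) ^ β * 1 * s ^ (-γ) := by
        gcongr
        exact one_add_rpow_mul_exp_neg_le_one hs.le hγ1
    _ = (1 + 2 * α) ^ β * s ^ (-γ) := by rw [mul_one]

theorem exists_gradKernel_bound_iff {ι : Type*} {α γ : ℝ} (hα : 0 < α)
    (hγ0 : 1 / (2 * α) ≤ γ) (hγ1 : γ ≤ 1) {lam σ : ι → ℝ} (hlam : ∀ n, 0 < lam n)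
    (hσ : ∀ n, 0 < σ n) :
    (∃ C₀ > (0 : ℝ), ∀ t > (0 : ℝ), ∀ n, 1 / σ n * gradKernel α (lam n) t ≤ C₀ * t ^ (-γ))
      ↔ ∃ C₁ > (0 : ℝ), ∀ n, σ n ≥ C₁ * lam n ^ (1 / (2 * α) - γ) := by
  set β := 1 / (2 * α)
  constructor
  · rintro ⟨C₀, hC₀, h⟩
    have hK := gradKernel_pos hα one_pos one_pos
    refine ⟨gradKernel α 1 1 / C₀, by positivity, fun n => ?_⟩
    have hln := hlam n
    have key := h (1 / lam n) (by positivity) n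
    rw [gradKernel_eq_rpow_mul hα hln (by positivity), mul_one_div_cancel hln.ne',
      one_div_mul_eq_div, div_le_iff₀' (hσ n), one_div (lam n), inv_rpow hln.le,
      rpow_neg hln.le, inv_inv] at key
    calc gradKernel α 1 1 / C₀ * lam n ^ (β - γ)
        = lam n ^ β * gradKernel α 1 1 / (C₀ * lam n ^ γ) := by
          rw [rpow_sub hln]
          field_simp
      _ ≤ σ n := by rwa [div_le_iff₀ (by positivity)]
  · rintro ⟨C₁, hC₁, h⟩
    refine ⟨(1 + 2 * α) ^ β / C₁, by positivity, fun t ht n => ?_⟩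
    have hln := hlam n
    calc 1 / σ n * gradKernel α (lam n) t
        ≤ 1 / (C₁ * lam n ^ (β - γ)) * (lam n ^ β * ((1 + 2 * α) ^ β * (lam n * t) ^ (-γ))) := by
          have hK := gradKernel_one_le hα hγ0 hγ1 (mul_pos hln ht)
          have hK0 := (gradKernel_pos hα one_pos (mul_pos hln ht)).le
          rw [gradKernel_eq_rpow_mul hα hln ht]
          gcongr
          exact h n
      _ = (1 + 2 * α) ^ β / C₁ * t ^ (-γ) := by
          rw [mul_rpow hln.le ht.le, rpow_sub hln, rpow_neg hln.le]
          field_simp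

/-- Equivalence of the gradient-estimate Hypothesis (iii) with its reformulation (iii'):
for `α ∈ (1/2,1)`, `γ ∈ [1/(2α),1)`, `0 < λ₁ ≤ λ₂ ≤ ⋯` and `σₙ > 0`,
`sup_n (1/σₙ)(2αλₙ/(1−e^{−2αλₙt}))^{1/(2α)} e^{−λₙt} ≤ C₀ t^{−γ}` for all `t > 0`
holds for some `C₀ > 0` iff `σₙ ≥ C₁ λₙ^{1/(2α)−γ}` for all `n`, for some `C₁ > 0`. -/
theorem stmt_9 (α γ : ℝ) (hα : α ∈ Set.Ioo (1 / 2 : ℝ) 1)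
    (hγ : γ ∈ Set.Ico (1 / (2 * α)) 1)
    (lam σ : ℕ → ℝ) (hmono : Monotone lam) (hpos : 0 < lam 0) (hσ : ∀ n, 0 < σ n) :
    (∃ C₀ > (0 : ℝ), ∀ t > (0 : ℝ), ∀ n,
        (1 / σ n) * (2 * α * lam n / (1 - Real.exp (-(2 * α * lam n * t)))) ^ (1 / (2 * α)) *
            Real.exp (-lam n * t)
          ≤ C₀ * t ^ (-γ))
      ↔ ∃ C₁ > (0 : ℝ), ∀ n, σ n ≥ C₁ * lam n ^ (1 / (2 * α) - γ) := by
  have hα0 : 0 < α := by linarith [hα.1]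
  have hlam : ∀ n, 0 < lam n := fun n => hpos.trans_le (hmono n.zero_le)
  simpa only [gradKernel, ← mul_assoc] using
    exists_gradKernel_bound_iff hα0 hγ.1 hγ.2.le hlam hσ
end

section
/- Let N ∈ ℕ, let Σ be a symmetric positive-definite real N×N matrix, let ρ(y) = exp(−⟨Σ⁻¹ y, y⟩/2) for y ∈ ℝᴺ, let B : ℝᴺ → ℝᴺ be a linear map, and let φ : ℝᴺ → ℝ be bounded and Borel measurable. Then the function F(x) = ∫_{ℝᴺ} φ(Bx + y) ρ(y) dy is (Fréchet) differentiable at every x ∈ ℝᴺ, and for every direction h ∈ ℝᴺ its derivative is ⟨∇F(x), h⟩ = ∫_{ℝᴺ} φ(Bx + y) ⟨Σ⁻¹ y, B h⟩ ρ(y) dy. -/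
/-!
Substituting `z = Bx + y` gives `F(x) = G(Bx)` with `G(v) = ∫ φ(z) ρ(z - v) dz`, so the parameter
only enters through the smooth kernel and `φ` needs no regularity. Positive definiteness of `Σ⁻¹`
gives `⟨Σ⁻¹w, w⟩ ≥ c‖w‖²` (compactness of the unit sphere), so `ρ` and its derivative
`-ρ(w) ⟨Σ⁻¹w, ·⟩` are `O((1 + ‖w‖) e^{-c‖w‖²/2})`. Shifting `w` by at most `1` costs only a constant
factor and half the exponent in such a bound, which yields the integrable majorant needed to
differentiate `G` under the integral sign.
-/

open MeasureTheory Filter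

section GaussianIntegrability

variable {E : Type*} [NormedAddCommGroup E] [NormedSpace ℝ E] [FiniteDimensional ℝ E]
  [MeasurableSpace E] [BorelSpace E] (μ : Measure E) [μ.IsAddHaarMeasure]

theorem integrable_norm_pow_mul_exp_neg_mul_sq {b : ℝ} (hb : 0 < b) (k : ℕ) :
    Integrable (fun x : E => ‖x‖ ^ k * Real.exp (-b * ‖x‖ ^ 2)) μ := by
  rcases subsingleton_or_nontrivial E with hE | hE
  · simp [Subsingleton.elim _ (0 : E)]
  rw [integrable_fun_norm_addHaar μ (f := fun y => y ^ k * Real.exp (-b * y ^ 2))]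
  refine (integrableOn_rpow_mul_exp_neg_mul_sq hb (s := (Module.finrank ℝ E - 1 + k : ℕ))
    (neg_one_lt_zero.trans_le (Nat.cast_nonneg _))).congr_fun (fun y _ => ?_) measurableSet_Ioi
  simp only [Real.rpow_natCast, pow_add, mul_assoc, smul_eq_mul]

theorem integrable_one_add_norm_mul_exp_neg_mul_sq {b : ℝ} (hb : 0 < b) :
    Integrable (fun x : E => (1 + ‖x‖) * Real.exp (-b * ‖x‖ ^ 2)) μ := by
  refine ((integrable_norm_pow_mul_exp_neg_mul_sq μ hb 0).add
    (integrable_norm_pow_mul_exp_neg_mul_sq μ hb 1)).congr (ae_of_all _ fun x => ?_)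
  simp [add_mul]

end GaussianIntegrability

section GaussianDecay

variable {E F : Type*} [NormedAddCommGroup E] [NormedAddCommGroup F]

/-- The factor `1 + ‖w‖` makes the class contain the derivative `-e^{-b(w,w)/2} b(w, ·)` of a
Gaussian, not only the Gaussian itself. -/
def HasGaussianDecay (f : E → F) : Prop :=
  ∃ C c, 0 < c ∧ ∀ w, ‖f w‖ ≤ C * ((1 + ‖w‖) * Real.exp (-c * ‖w‖ ^ 2))

theorem one_add_norm_mul_exp_neg_mul_sq_sub_le {c : ℝ} (hc : 0 ≤ c) (w : E) {u : E}
    (hu : ‖u‖ ≤ 1) :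
    (1 + ‖w - u‖) * Real.exp (-c * ‖w - u‖ ^ 2)
      ≤ 2 * Real.exp c * ((1 + ‖w‖) * Real.exp (-(c / 2) * ‖w‖ ^ 2)) := by
  have hlin : 1 + ‖w - u‖ ≤ 2 * (1 + ‖w‖) := by
    linarith [norm_sub_le w u, norm_nonneg w]
  have hexp : Real.exp (-c * ‖w - u‖ ^ 2) ≤ Real.exp c * Real.exp (-(c / 2) * ‖w‖ ^ 2) := by
    rw [← Real.exp_add]
    gcongr
    have hsq : ‖w‖ ^ 2 ≤ 2 * ‖w - u‖ ^ 2 + 2 := by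
      nlinarith [norm_le_norm_sub_add w u, norm_nonneg (w - u), sq_nonneg (‖w - u‖ - 1)]
    nlinarith [mul_le_mul_of_nonneg_left hsq hc]
  calc (1 + ‖w - u‖) * Real.exp (-c * ‖w - u‖ ^ 2)
      ≤ (2 * (1 + ‖w‖)) * (Real.exp c * Real.exp (-(c / 2) * ‖w‖ ^ 2)) := by gcongr
    _ = _ := by ring

variable [NormedSpace ℝ E] [FiniteDimensional ℝ E] [MeasurableSpace E] [BorelSpace E]
  (μ : Measure E) [μ.IsAddHaarMeasure] {f : E → F}

theorem HasGaussianDecay.integrable (hf : HasGaussianDecay f) (hfm : AEStronglyMeasurable f μ) :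
    Integrable f μ := by
  obtain ⟨C, c, hc, hle⟩ := hf
  exact ((integrable_one_add_norm_mul_exp_neg_mul_sq μ hc).const_mul C).mono' hfm
    (ae_of_all _ hle)

theorem HasGaussianDecay.exists_integrable_bound_comp_sub (hf : HasGaussianDecay f) :
    ∃ bound : E → ℝ, Integrable bound μ ∧ ∀ w u, ‖u‖ ≤ 1 → ‖f (w - u)‖ ≤ bound w := by
  obtain ⟨C, c, hc, hle⟩ := hf
  have hC : 0 ≤ C := by
    have := hle 0
    rw [norm_zero, zero_pow two_ne_zero] at this
    exact nonneg_of_mul_nonneg_left ((norm_nonneg _).trans this) (by positivity)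
  refine ⟨fun w => C * (2 * Real.exp c * ((1 + ‖w‖) * Real.exp (-(c / 2) * ‖w‖ ^ 2))),
    ((integrable_one_add_norm_mul_exp_neg_mul_sq μ (half_pos hc)).const_mul _).const_mul C,
    fun w u hu => (hle _).trans ?_⟩
  exact mul_le_mul_of_nonneg_left (one_add_norm_mul_exp_neg_mul_sq_sub_le hc.le w hu) hC

end GaussianDecay

section Convolution

variable {E : Type*} [NormedAddCommGroup E] [NormedSpace ℝ E] [FiniteDimensional ℝ E]
  [MeasurableSpace E] [BorelSpace E] (μ : Measure E) [μ.IsAddHaarMeasure]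
  {φ : E → ℝ} {M : ℝ} {g : E → ℝ} {g' : E → E →L[ℝ] ℝ}

theorem integrable_comp_add_smul (hφm : Measurable φ) (hφ : ∀ z, |φ z| ≤ M)
    (hg' : Continuous g') (hg'_decay : HasGaussianDecay g') (v : E) :
    Integrable (fun y => φ (v + y) • g' y) μ :=
  (hg'_decay.integrable μ hg'.aestronglyMeasurable).bdd_smul M
    (hφm.comp (measurable_const_add v)).aestronglyMeasurable (ae_of_all _ fun y => hφ (v + y))

theorem hasFDerivAt_integral_comp_add_mul (hφm : Measurable φ) (hφ : ∀ z, |φ z| ≤ M)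
    (hg : ∀ w, HasFDerivAt g (g' w) w) (hg' : Continuous g') (hg_decay : HasGaussianDecay g)
    (hg'_decay : HasGaussianDecay g') (v : E) :
    HasFDerivAt (fun v => ∫ y, φ (v + y) * g y ∂μ) (-∫ y, φ (v + y) • g' y ∂μ) v := by
  have hgc : Continuous g := continuous_iff_continuousAt.2 fun w => (hg w).continuousAt
  have hg_int : Integrable g μ := hg_decay.integrable μ hgc.aestronglyMeasurable
  obtain ⟨bound, hbound_int, hbound⟩ := hg'_decay.exists_integrable_bound_comp_sub μ
  have hderiv : ∀ z v', HasFDerivAt (fun v' => φ z * g (z - v')) (-(φ z • g' (z - v'))) v' := by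
    intro z v'
    refine (((hg (z - v')).comp v' ((hasFDerivAt_const z v').sub (hasFDerivAt_id v'))).const_mul
      (φ z)).congr_fderiv ?_
    ext h
    simp
  have key : HasFDerivAt (fun v' => ∫ z, φ z * g (z - v') ∂μ)
      (∫ z, -(φ z • g' (z - v)) ∂μ) v := by
    refine hasFDerivAt_integral_of_dominated_of_fderiv_le (bound := fun z => M * bound (z - v))
      (Metric.ball_mem_nhds v one_pos) (Eventually.of_forall fun v' => ?_) ?_ ?_ (ae_of_all _ ?_)
      (hbound_int.comp_sub_right v |>.const_mul M) (ae_of_all _ fun z v' _ => hderiv z v')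
    · exact (hφm.mul (hgc.comp (continuous_id.sub continuous_const)).measurable)
        |>.aestronglyMeasurable
    · exact (hg_int.comp_sub_right v).bdd_mul hφm.aestronglyMeasurable (ae_of_all _ hφ)
    · exact (hφm.aestronglyMeasurable.smul
        (hg'.comp (continuous_id.sub continuous_const)).aestronglyMeasurable).neg
    · intro z v' hv'
      have hu : ‖v' - v‖ ≤ 1 := (mem_ball_iff_norm.mp hv').le
      rw [norm_neg, norm_smul, Real.norm_eq_abs, show z - v' = z - v - (v' - v) by abel]
      exact mul_le_mul (hφ z) (hbound _ _ hu) (norm_nonneg _) ((abs_nonneg _).trans (hφ z))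
  convert key using 1
  · ext v'
    rw [← integral_add_left_eq_self (fun z => φ z * g (z - v')) v']
    simp
  · rw [integral_neg, ← integral_add_left_eq_self (fun z => φ z • g' (z - v)) v]
    simp

end Convolution

theorem IsCoercive.of_pos {E : Type*} [NormedAddCommGroup E] [NormedSpace ℝ E]
    [FiniteDimensional ℝ E] {B : E →L[ℝ] E →L[ℝ] ℝ} (hB : ∀ u ≠ 0, 0 < B u u) :
    IsCoercive B := by
  rcases subsingleton_or_nontrivial E with hE | hE
  · exact ⟨1, one_pos, fun u => by simp [Subsingleton.elim u 0]⟩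
  obtain ⟨u₀, hu₀, hmin⟩ := (isCompact_sphere (0 : E) 1).exists_isMinOn
    (NormedSpace.sphere_nonempty.mpr zero_le_one)
    (by fun_prop : Continuous fun u => B u u).continuousOn
  have hu₀ : ‖u₀‖ = 1 := by simpa using hu₀
  refine ⟨B u₀ u₀, hB u₀ (norm_ne_zero_iff.mp (by simp [hu₀])), fun u => ?_⟩
  rcases eq_or_ne u 0 with rfl | hu
  · simp
  have hnorm : 0 < ‖u‖ := norm_pos_iff.mpr hu
  have hmem : ‖u‖⁻¹ • u ∈ Metric.sphere (0 : E) 1 := by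
    simp [norm_smul, hnorm.ne']
  have hle : B u₀ u₀ ≤ ‖u‖⁻¹ * ‖u‖⁻¹ * B u u := by
    simpa [mul_assoc] using hmin hmem
  calc B u₀ u₀ * ‖u‖ * ‖u‖ ≤ ‖u‖⁻¹ * ‖u‖⁻¹ * B u u * ‖u‖ * ‖u‖ := by gcongr
    _ = B u u := by field_simp

section GaussianKernel

variable {E : Type*} [NormedAddCommGroup E] [NormedSpace ℝ E] {b : E →L[ℝ] E →L[ℝ] ℝ}

theorem hasFDerivAt_exp_neg_half_apply_self (hb : ∀ v w, b v w = b w v) (w : E) :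
    HasFDerivAt (fun v => Real.exp (-b v v / 2)) (-Real.exp (-b w w / 2) • b w) w := by
  convert ((b.hasFDerivAt_of_bilinear (hasFDerivAt_id w) (hasFDerivAt_id w)).const_mul
    (-1 / 2 : ℝ)).exp using 1
  · ext v
    simp only [id]
    ring_nf
  · ext h
    simp only [ContinuousLinearMap.precompR_apply, ContinuousLinearMap.precompL_apply,
      ContinuousLinearMap.compL_apply, ContinuousLinearMap.comp_id, ContinuousLinearMap.id_apply,
      add_apply, smul_add, smul_apply, smul_eq_mul, id_eq, hb h w,
      show -b w w / 2 = -1 / 2 * b w w by ring]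
    ring

theorem continuous_exp_neg_half_smul : Continuous fun w => -Real.exp (-b w w / 2) • b w := by
  fun_prop

theorem exp_neg_half_apply_self_le {c : ℝ} (hc : ∀ u, c * ‖u‖ * ‖u‖ ≤ b u u) (w : E) :
    Real.exp (-b w w / 2) ≤ Real.exp (-(c / 2) * ‖w‖ ^ 2) := by
  gcongr
  linarith [hc w]

theorem IsCoercive.hasGaussianDecay_exp_neg_half (hb : IsCoercive b) :
    HasGaussianDecay fun w => Real.exp (-b w w / 2) := by
  obtain ⟨c, hc, hcoer⟩ := hb
  refine ⟨1, c / 2, half_pos hc, fun w => ?_⟩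
  rw [Real.norm_eq_abs, abs_of_pos (Real.exp_pos _), one_mul]
  calc Real.exp (-b w w / 2) ≤ Real.exp (-(c / 2) * ‖w‖ ^ 2) := exp_neg_half_apply_self_le hcoer w
    _ ≤ (1 + ‖w‖) * Real.exp (-(c / 2) * ‖w‖ ^ 2) :=
      le_mul_of_one_le_left (Real.exp_pos _).le (by linarith [norm_nonneg w])

theorem IsCoercive.hasGaussianDecay_exp_neg_half_smul (hb : IsCoercive b) :
    HasGaussianDecay fun w => -Real.exp (-b w w / 2) • b w := by
  obtain ⟨c, hc, hcoer⟩ := hb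
  refine ⟨‖b‖, c / 2, half_pos hc, fun w => ?_⟩
  dsimp only
  rw [norm_smul, norm_neg, Real.norm_eq_abs, abs_of_pos (Real.exp_pos _)]
  calc Real.exp (-b w w / 2) * ‖b w‖ ≤ Real.exp (-(c / 2) * ‖w‖ ^ 2) * (‖b‖ * (1 + ‖w‖)) := by
        gcongr
        · exact Real.exp_le_exp.mp (exp_neg_half_apply_self_le hcoer w)
        · exact (b.le_opNorm w).trans (by gcongr; linarith)
    _ = _ := by ring

end GaussianKernel

open Matrix in
/-- Differentiation under a Gaussian kernel: for a symmetric positive-definite `N×N`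
matrix `Σ`, `ρ(y) = exp(−⟨Σ⁻¹y, y⟩/2)`, a linear map `B` and a bounded Borel `φ`, the
function `F(x) = ∫ φ(Bx + y) ρ(y) dy` is Fréchet differentiable everywhere, with
`⟨∇F(x), h⟩ = ∫ φ(Bx + y) ⟨Σ⁻¹y, Bh⟩ ρ(y) dy`. -/
theorem stmt_15 (N : ℕ) (S : Matrix (Fin N) (Fin N) ℝ) (hS : S.PosDef)
    (B : (Fin N → ℝ) →ₗ[ℝ] (Fin N → ℝ)) (φ : (Fin N → ℝ) → ℝ)
    (hφb : ∃ M : ℝ, ∀ y, |φ y| ≤ M) (hφm : Measurable φ) (x : Fin N → ℝ) :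
    ∃ F' : (Fin N → ℝ) →L[ℝ] ℝ,
      HasFDerivAt
        (fun x' : Fin N → ℝ =>
          ∫ y : Fin N → ℝ,
            φ (B x' + y) * Real.exp (-(∑ i, S⁻¹.mulVec y i * y i) / 2))
        F' x ∧
      ∀ h : Fin N → ℝ,
        F' h = ∫ y : Fin N → ℝ,
          φ (B x + y) * (∑ i, S⁻¹.mulVec y i * B h i) *
            Real.exp (-(∑ i, S⁻¹.mulVec y i * y i) / 2) := by
  obtain ⟨M, hM⟩ := hφb
  set b := (toBilin' S⁻¹).toContinuousBilinearMap
  have hsum : ∀ v w, ∑ i, (S⁻¹ *ᵥ v) i * w i = b w v := fun v w => by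
    simp [b, toBilin'_apply', dotProduct, mul_comm]
  have hb_symm : ∀ v w, b v w = b w v :=
    (isSymm_toBilin'_iff_isSymm.mpr (isHermitian_iff_isSymm.mp hS.inv.isHermitian)).eq
  have hb_coer : IsCoercive b := IsCoercive.of_pos fun u hu => by
    simpa [b, toBilin'_apply'] using hS.inv.dotProduct_mulVec_pos hu
  have hF := (hasFDerivAt_integral_comp_add_mul volume hφm hM
    (hasFDerivAt_exp_neg_half_apply_self hb_symm) continuous_exp_neg_half_smul
    hb_coer.hasGaussianDecay_exp_neg_half hb_coer.hasGaussianDecay_exp_neg_half_smul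
    (B x)).comp x (LinearMap.toContinuousLinearMap B).hasFDerivAt
  simp only [hsum]
  refine ⟨_, hF, fun h => ?_⟩
  rw [ContinuousLinearMap.comp_apply, _root_.neg_apply,
    ContinuousLinearMap.integral_apply (integrable_comp_add_smul volume hφm hM
      continuous_exp_neg_half_smul hb_coer.hasGaussianDecay_exp_neg_half_smul _), ← integral_neg]
  congr with y
  simp only [LinearMap.coe_toContinuousLinearMap', _root_.smul_apply, smul_eq_mul, hb_symm]
  ring
end

section
/- Let H be a separable Hilbert space with orthonormal basis (eₙ)ₙ, let α ∈ (0,1) and c > 0, let L be a nonnegative real random variable whose Laplace transform satisfies E[e^{−uL}] = e^{−c u^α} for all u ≥ 0, let (Xₙ)ₙ be a sequence of i.i.d. standard Gaussian random variables independent of L, and let (σₙ)ₙ and (ρₙ)ₙ be sequences of nonnegative reals with (ρₙ)ₙ bounded and strictly positive such that Σ_{n=1}^∞ ρₙ^{2r} σₙ^{2r} < ∞ for some r ∈ (0, α). Then the series Σ_{n=1}^∞ ρₙ σₙ √L Xₙ eₙ converges ℙ-almost surely in H. -/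
/-!
The factor `√L` is a scalar, constant along the series, so everything hinges on the Gaussian
series `∑ aₙ Xₙ eₙ` with `aₙ = ρₙ σₙ`. Since `2r < 2`, summability of `aₙ^{2r}` forces that of
`aₙ²`; then `E[∑ aₙ² Xₙ²] = ∑ aₙ² < ∞`, so `∑ aₙ² Xₙ²` is almost surely finite, and a series
along a Hilbert basis with square-summable coefficients converges.
-/

open MeasureTheory ProbabilityTheory Filter Topology
open scoped ENNReal

lemma Summable.rpow_of_exponent_le {ι : Type*} {a : ι → ℝ} {p q : ℝ} (ha : ∀ i, 0 ≤ a i)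
    (hp : 0 < p) (hpq : p ≤ q) (h : Summable fun i => a i ^ p) :
    Summable fun i => a i ^ q := by
  refine h.of_norm_bounded_eventually ?_
  filter_upwards [h.tendsto_cofinite_zero.eventually (gt_mem_nhds one_pos)] with i hi
  rw [Real.norm_of_nonneg (Real.rpow_nonneg (ha i) q)]
  rcases (ha i).eq_or_lt with h0 | h0
  · simp [← h0, Real.zero_rpow hp.ne', Real.zero_rpow (hp.trans_le hpq).ne']
  · have ha1 : a i ≤ 1 := by
      by_contra! h1
      linarith [Real.one_le_rpow h1.le hp.le]
    exact Real.rpow_le_rpow_of_exponent_ge h0 ha1 hpq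

lemma HilbertBasis.summable_smul_of_summable_sq {ι 𝕜 E : Type*} [RCLike 𝕜]
    [NormedAddCommGroup E] [InnerProductSpace 𝕜 E] (b : HilbertBasis ι 𝕜 E) {f : ι → 𝕜}
    (hf : Summable fun i => ‖f i‖ ^ 2) : Summable fun i => f i • b i :=
  (b.hasSum_repr_symm ⟨f, memℓp_gen (by simpa using hf)⟩).summable

lemma lintegral_ofReal_sq_gaussianReal_lt_top (μ : ℝ) (v : NNReal) :
    ∫⁻ x, ENNReal.ofReal (x ^ 2) ∂gaussianReal μ v < ∞ :=
  (memLp_id_gaussianReal 2).integrable_sq.lintegral_lt_top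

lemma ae_summable_mul_of_lintegral_le {Ω : Type*} [MeasurableSpace Ω] {μ : Measure Ω}
    {Z : ℕ → Ω → ℝ} {c : ℕ → ℝ} {C : ℝ≥0∞} (hZ : ∀ n, Measurable (Z n))
    (hZ_nonneg : ∀ n ω, 0 ≤ Z n ω) (hZ_le : ∀ n, ∫⁻ ω, ENNReal.ofReal (Z n ω) ∂μ ≤ C)
    (hC : C ≠ ∞) (hc_nonneg : ∀ n, 0 ≤ c n) (hc : Summable c) :
    ∀ᵐ ω ∂μ, Summable fun n => c n * Z n ω := by
  have hmeas : ∀ n, Measurable fun ω => ENNReal.ofReal (c n * Z n ω) :=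
    fun n => ((hZ n).const_mul _).ennreal_ofReal
  have hfinite : ∫⁻ ω, ∑' n, ENNReal.ofReal (c n * Z n ω) ∂μ ≠ ∞ := by
    rw [lintegral_tsum fun n => (hmeas n).aemeasurable]
    refine ne_top_of_le_ne_top (ENNReal.mul_ne_top hc.tsum_ofReal_ne_top hC) ?_
    rw [← ENNReal.tsum_mul_right]
    refine ENNReal.tsum_le_tsum fun n => ?_
    simp_rw [ENNReal.ofReal_mul (hc_nonneg n)]
    rw [lintegral_const_mul _ (hZ n).ennreal_ofReal]
    gcongr
    exact hZ_le n
  filter_upwards [ae_lt_top (.tsum hmeas) hfinite] with ω hω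
  refine (ENNReal.summable_toReal hω.ne).congr fun n => ?_
  exact ENNReal.toReal_ofReal (mul_nonneg (hc_nonneg n) (hZ_nonneg n ω))

theorem stmt_16_general {H : Type*} [NormedAddCommGroup H] [InnerProductSpace ℝ H]
    {Ω : Type*} [MeasurableSpace Ω] (P : Measure Ω)
    (e : HilbertBasis ℕ ℝ H)
    (α : ℝ) (hα : α ∈ Set.Ioo (0 : ℝ) 1)
    (L : Ω → ℝ)
    (X : ℕ → Ω → ℝ) (hX : ∀ n, Measurable (X n))
    (hXlaw : ∀ n, P.map (X n) = gaussianReal 0 1)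
    (σ ρ : ℕ → ℝ) (hσ : ∀ n, 0 ≤ σ n) (hρpos : ∀ n, 0 < ρ n)
    (r : ℝ) (hr : r ∈ Set.Ioo (0 : ℝ) α)
    (hsum : Summable (fun n => ρ n ^ (2 * r) * σ n ^ (2 * r))) :
    ∀ᵐ ω ∂P, ∃ l : H,
      Tendsto
        (fun N => ∑ n ∈ Finset.range N, (ρ n * σ n * Real.sqrt (L ω) * X n ω) • e n)
        atTop (𝓝 l) := by
  have ha_nonneg : ∀ n, 0 ≤ ρ n * σ n := fun n => mul_nonneg (hρpos n).le (hσ n)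
  have ha_sq : Summable fun n => (ρ n * σ n) ^ 2 := by
    have hrpow : Summable fun n => (ρ n * σ n) ^ (2 * r) :=
      hsum.congr fun n => (Real.mul_rpow (hρpos n).le (hσ n)).symm
    simpa using hrpow.rpow_of_exponent_le ha_nonneg (by linarith [hr.1])
      (show 2 * r ≤ (2 : ℕ) by push_cast; linarith [hr.2, hα.2])
  have hX_sq : ∀ n, ∫⁻ ω, ENNReal.ofReal (X n ω ^ 2) ∂P
      ≤ ∫⁻ x, ENNReal.ofReal (x ^ 2) ∂gaussianReal 0 1 := fun n => by
    rw [← hXlaw n, lintegral_map (by fun_prop) (hX n)]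
  filter_upwards [ae_summable_mul_of_lintegral_le (fun n => (hX n).pow_const 2)
    (fun n ω => sq_nonneg _) hX_sq (lintegral_ofReal_sq_gaussianReal_lt_top 0 1).ne
    (fun n => sq_nonneg _) ha_sq] with ω hω
  refine ⟨_, (e.summable_smul_of_summable_sq ?_).hasSum.tendsto_sum_nat⟩
  refine (hω.mul_left (Real.sqrt (L ω) ^ 2)).congr fun n => ?_
  rw [Real.norm_eq_abs, sq_abs]
  ring

/-- Almost sure convergence of the series defining the subordinated cylindrical Wiener
process: if `L ≥ 0` has Laplace transform `E[e^{-uL}] = e^{-c u^α}`, `(Xₙ)` are i.i.d.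
standard Gaussians independent of `L`, `(ρₙ)` is bounded and strictly positive, `σₙ ≥ 0`,
and `∑ₙ ρₙ^{2r} σₙ^{2r} < ∞` for some `r ∈ (0,α)`, then `∑ₙ ρₙ σₙ √L Xₙ eₙ` converges
almost surely in `H`. -/
theorem stmt_16 {H : Type*} [NormedAddCommGroup H] [InnerProductSpace ℝ H]
    [CompleteSpace H] [TopologicalSpace.SeparableSpace H]
    {Ω : Type*} [MeasurableSpace Ω] (P : Measure Ω) [IsProbabilityMeasure P]
    (e : HilbertBasis ℕ ℝ H)
    (α c : ℝ) (hα : α ∈ Set.Ioo (0 : ℝ) 1) (hc : 0 < c)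
    (L : Ω → ℝ) (hL : Measurable L) (hLnn : ∀ ω, 0 ≤ L ω)
    (hLap : ∀ u : ℝ, 0 ≤ u → ∫ ω, Real.exp (-u * L ω) ∂P = Real.exp (-c * u ^ α))
    (X : ℕ → Ω → ℝ) (hX : ∀ n, Measurable (X n))
    (hiid : iIndepFun X P)
    (hXlaw : ∀ n, P.map (X n) = gaussianReal 0 1)
    (hindep : IndepFun L (fun ω n => X n ω) P)
    (σ ρ : ℕ → ℝ) (hσ : ∀ n, 0 ≤ σ n) (hρpos : ∀ n, 0 < ρ n)
    (hρbdd : ∃ M : ℝ, ∀ n, ρ n ≤ M)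
    (r : ℝ) (hr : r ∈ Set.Ioo (0 : ℝ) α)
    (hsum : Summable (fun n => ρ n ^ (2 * r) * σ n ^ (2 * r))) :
    ∀ᵐ ω ∂P, ∃ l : H,
      Tendsto
        (fun N => ∑ n ∈ Finset.range N, (ρ n * σ n * Real.sqrt (L ω) * X n ω) • e n)
        atTop (𝓝 l) :=
  stmt_16_general P e α hα L X hX hXlaw σ ρ hσ hρpos r hr hsum
end
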